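/- Let γ : ℝ → ℝ² be a C^∞ curve with a 3/2-cusp at t = 0. Then lim_{t→0} √(|s_g(t)|)·κ_g(t) = μ_g/(2√2), where μ_g is the Euclidean cuspidal curvature of γ at t = 0. -/

import Mathlib

noncomputable section
open Real Set Filter Topology

/-- The determinant `[a, b] = a₁b₂ − a₂b₁` of two vectors in the plane. -/
def det2 (a b : ℝ × ℝ) : ℝ := a.1 * b.2 - a.2 * b.1

/-- The Euclidean norm on `ℝ × ℝ`. -/
def enorm2 (a : ℝ × ℝ) : ℝ := Real.sqrt (a.1 ^ 2 + a.2 ^ 2)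

/-- The Euclidean arclength parameter of `γ` based at `0`. -/
def sG (γ : ℝ → ℝ × ℝ) (t : ℝ) : ℝ := ∫ u in (0:ℝ)..t, enorm2 (deriv γ u)

/-- The affine arclength parameter of `γ` based at `0`. -/
def sA (γ : ℝ → ℝ × ℝ) (t : ℝ) : ℝ :=
  ∫ u in (0:ℝ)..t, |det2 (deriv γ u) (iteratedDeriv 2 γ u)| ^ ((1:ℝ)/3)

/-- The Euclidean curvature `κ_g = [γ', γ'']/‖γ'‖³`. -/
def kappaG (γ : ℝ → ℝ × ℝ) (t : ℝ) : ℝ :=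
  det2 (deriv γ t) (iteratedDeriv 2 γ t) / enorm2 (deriv γ t) ^ 3

/-- The affine curvature `κ_A`. -/
def kappaA (γ : ℝ → ℝ × ℝ) (t : ℝ) : ℝ :=
  (3 * det2 (deriv γ t) (iteratedDeriv 2 γ t) * det2 (deriv γ t) (iteratedDeriv 4 γ t)
    + 12 * det2 (deriv γ t) (iteratedDeriv 2 γ t)
        * det2 (iteratedDeriv 2 γ t) (iteratedDeriv 3 γ t)
    - 5 * det2 (deriv γ t) (iteratedDeriv 3 γ t) ^ 2)
  / (9 * |det2 (deriv γ t) (iteratedDeriv 2 γ t)| ^ ((8:ℝ)/3))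

/-- `γ` has a 3/2-cusp at `t = 0`. -/
def HasCusp (γ : ℝ → ℝ × ℝ) : Prop :=
  deriv γ 0 = 0 ∧ det2 (iteratedDeriv 2 γ 0) (iteratedDeriv 3 γ 0) ≠ 0

/-- The Euclidean cuspidal curvature at a 3/2-cusp `t = 0`. -/
def muG (γ : ℝ → ℝ × ℝ) : ℝ :=
  det2 (iteratedDeriv 2 γ 0) (iteratedDeriv 3 γ 0) / enorm2 (iteratedDeriv 2 γ 0) ^ ((5:ℝ)/2)

/-- The affine cuspidal curvature at a 3/2-cusp `t = 0`. -/
def muA (γ : ℝ → ℝ × ℝ) : ℝ :=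
  (24 * det2 (iteratedDeriv 2 γ 0) (iteratedDeriv 3 γ 0)
      * det2 (iteratedDeriv 2 γ 0) (iteratedDeriv 5 γ 0)
   + 60 * det2 (iteratedDeriv 2 γ 0) (iteratedDeriv 3 γ 0)
      * det2 (iteratedDeriv 3 γ 0) (iteratedDeriv 4 γ 0)
   - 35 * det2 (iteratedDeriv 2 γ 0) (iteratedDeriv 4 γ 0) ^ 2)
  / |det2 (iteratedDeriv 2 γ 0) (iteratedDeriv 3 γ 0)| ^ ((12:ℝ)/5)

/-- `γ` (regular at `0`) has a generic inflection point at `t = 0`. -/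
def HasGenericInflection (γ : ℝ → ℝ × ℝ) : Prop :=
  deriv γ 0 ≠ 0 ∧ det2 (deriv γ 0) (iteratedDeriv 2 γ 0) = 0 ∧
    det2 (deriv γ 0) (iteratedDeriv 3 γ 0) ≠ 0

/-- The affine inflectional curvature at a generic inflection point `t = 0`. -/
def muI (γ : ℝ → ℝ × ℝ) : ℝ :=
  Real.sign (det2 (deriv γ 0) (iteratedDeriv 3 γ 0)) *
    (det2 (deriv γ 0) (iteratedDeriv 4 γ 0)
      - 6 * det2 (iteratedDeriv 2 γ 0) (iteratedDeriv 3 γ 0))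
  / |det2 (deriv γ 0) (iteratedDeriv 3 γ 0)| ^ ((5:ℝ)/4)

/-- The affine map `x ↦ Ax + v` on the plane, with `A = (a b; c d)`. -/
def applyAff (a b c d : ℝ) (v : ℝ × ℝ) (p : ℝ × ℝ) : ℝ × ℝ :=
  (a * p.1 + b * p.2 + v.1, c * p.1 + d * p.2 + v.2)

/-!
Near a 3/2-cusp `γ'(t) = t γ''(0) + O(t²)`, so `‖γ'(t)‖ ~ |t| ‖γ''(0)‖` and, integrating,
`s_g(t) ~ t |t| ‖γ''(0)‖ / 2`. The function `[γ', γ'']` vanishes at `0` together with its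
derivative `[γ', γ''']`, whose own derivative at `0` is `[γ''(0), γ'''(0)]`; hence
`[γ'(t), γ''(t)] ~ t² [γ''(0), γ'''(0)] / 2`. Each of these asymptotics is a single application
of L'Hôpital's rule, and multiplying them gives the limit.
-/

section Projections

variable {𝕜 E F : Type*} [NontriviallyNormedField 𝕜] [NormedAddCommGroup E] [NormedSpace 𝕜 E]
  [NormedAddCommGroup F] [NormedSpace 𝕜 F] {f : 𝕜 → E × F} {f' : E × F} {x : 𝕜}

theorem HasDerivAt.fst (h : HasDerivAt f f' x) : HasDerivAt (fun t => (f t).1) f'.1 x :=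
  (ContinuousLinearMap.fst 𝕜 E F).hasFDerivAt.comp_hasDerivAt x h

theorem HasDerivAt.snd (h : HasDerivAt f f' x) : HasDerivAt (fun t => (f t).2) f'.2 x :=
  (ContinuousLinearMap.snd 𝕜 E F).hasFDerivAt.comp_hasDerivAt x h

end Projections

theorem hasDerivAt_iteratedDeriv {𝕜 F : Type*} [NontriviallyNormedField 𝕜] [NormedAddCommGroup F]
    [NormedSpace 𝕜 F] {f : 𝕜 → F} {n : ℕ} (hf : ContDiff 𝕜 (n + 1) f) (x : 𝕜) :
    HasDerivAt (iteratedDeriv n f) (iteratedDeriv (n + 1) f x) x := by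
  rw [iteratedDeriv_succ]
  exact (hf.differentiable_iteratedDeriv' n x).hasDerivAt

theorem HasDerivAt.det2 {f g : ℝ → ℝ × ℝ} {f' g' : ℝ × ℝ} {x : ℝ}
    (hf : HasDerivAt f f' x) (hg : HasDerivAt g g' x) :
    HasDerivAt (fun t => det2 (f t) (g t)) (det2 f' (g x) + det2 (f x) g') x := by
  refine ((hf.fst.fun_mul hg.snd).fun_sub (hf.snd.fun_mul hg.fst)).congr_deriv ?_
  simp only [_root_.det2]
  ring

theorem enorm2_smul (c : ℝ) (v : ℝ × ℝ) : enorm2 (c • v) = |c| * enorm2 v := by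
  simp only [enorm2, Prod.smul_fst, Prod.smul_snd, smul_eq_mul]
  rw [show (c * v.1) ^ 2 + (c * v.2) ^ 2 = c ^ 2 * (v.1 ^ 2 + v.2 ^ 2) by ring,
    Real.sqrt_mul (sq_nonneg c), Real.sqrt_sq_eq_abs]

theorem continuous_enorm2 : Continuous enorm2 :=
  ((continuous_fst.pow 2).add (continuous_snd.pow 2)).sqrt

theorem enorm2_pos {v : ℝ × ℝ} (hv : v ≠ 0) : 0 < enorm2 v := by
  refine Real.sqrt_pos.2 ?_
  rcases v with ⟨a, b⟩
  by_cases ha : a = 0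
  · have hb : b ≠ 0 := by simpa [ha] using hv
    positivity
  · positivity

theorem hasDerivAt_mul_abs {x : ℝ} (hx : x ≠ 0) : HasDerivAt (fun t => t * |t|) (2 * |x|) x := by
  refine ((hasDerivAt_id' x).fun_mul (hasDerivAt_abs hx)).congr_deriv ?_
  rw [self_mul_sign]
  ring

theorem tendsto_div_sq_of_hasDerivAt {f f' : ℝ → ℝ} {c : ℝ} (hf : ∀ t, HasDerivAt f (f' t) t)
    (hf0 : f 0 = 0) (hf'0 : f' 0 = 0) (hf' : HasDerivAt f' c 0) :
    Tendsto (fun t => f t / t ^ 2) (𝓝[≠] 0) (𝓝 (c / 2)) := by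
  refine HasDerivAt.lhopital_zero_nhdsNE (f' := f') (g' := fun t => 2 * t)
    (.of_forall hf) (.of_forall fun t => by simpa using (hasDerivAt_pow 2 t))
    (eventually_nhdsWithin_of_forall fun t ht => mul_ne_zero two_ne_zero ht) ?_ ?_ ?_
  · simpa [hf0] using (hf 0).continuousAt.tendsto.mono_left nhdsWithin_le_nhds
  · simpa using ((continuous_pow 2).tendsto' (0 : ℝ) 0 (by simp)).mono_left nhdsWithin_le_nhds
  · refine ((hasDerivAt_iff_tendsto_slope.mp hf').div_const 2).congr' ?_
    filter_upwards [self_mem_nhdsWithin] with t ht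
    rw [slope_def_field, hf'0, sub_zero, sub_zero, div_div, mul_comm t]

theorem tendsto_div_mul_abs_of_hasDerivAt {f g : ℝ → ℝ} {c : ℝ}
    (hf : ∀ t, HasDerivAt f (g t) t) (hf0 : f 0 = 0)
    (hg : Tendsto (fun t => g t / |t|) (𝓝[≠] 0) (𝓝 c)) :
    Tendsto (fun t => f t / (t * |t|)) (𝓝[≠] 0) (𝓝 (c / 2)) := by
  refine HasDerivAt.lhopital_zero_nhdsNE (f' := g) (g' := fun t => 2 * |t|)
    (.of_forall hf) (eventually_nhdsWithin_of_forall fun t ht => hasDerivAt_mul_abs ht)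
    (eventually_nhdsWithin_of_forall fun t ht => mul_ne_zero two_ne_zero (abs_ne_zero.2 ht))
    ?_ ?_ ?_
  · simpa [hf0] using (hf 0).continuousAt.tendsto.mono_left nhdsWithin_le_nhds
  · have : Continuous fun t : ℝ => t * |t| := by fun_prop
    simpa using (this.tendsto' 0 0 (by simp)).mono_left nhdsWithin_le_nhds
  · exact (hg.div_const 2).congr fun t => by rw [div_div, mul_comm]

theorem tendsto_enorm2_div_abs_of_hasDerivAt {v : ℝ → ℝ × ℝ} {a : ℝ × ℝ} (hv0 : v 0 = 0)
    (hv : HasDerivAt v a 0) :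
    Tendsto (fun t => enorm2 (v t) / |t|) (𝓝[≠] 0) (𝓝 (enorm2 a)) := by
  have hslope : Tendsto (fun t : ℝ => t⁻¹ • v t) (𝓝[≠] 0) (𝓝 a) :=
    (hasDerivAt_iff_tendsto_slope.mp hv).congr fun t => by simp [slope_def_module, hv0]
  refine ((continuous_enorm2.tendsto a).comp hslope).congr fun t => ?_
  rw [Function.comp_apply, enorm2_smul, abs_inv, inv_mul_eq_div]

theorem sqrt_half_mul_half_div_pow_three {N : ℝ} (hN : 0 < N) (D : ℝ) :
    √(N / 2) * (D / 2) / N ^ 3 = D / N ^ ((5 : ℝ) / 2) / (2 * √2) := by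
  have h52 : N ^ ((5 : ℝ) / 2) = N ^ 2 * √N := by
    rw [show (5 : ℝ) / 2 = (2 : ℕ) + 1 / 2 by norm_num, Real.rpow_add hN, Real.rpow_natCast,
      Real.sqrt_eq_rpow]
  have h3 : N ^ 3 = N ^ 2 * (√N * √N) := by rw [Real.mul_self_sqrt hN.le]; ring
  have : √N ≠ 0 := by positivity
  rw [h52, h3, Real.sqrt_div hN.le]
  field_simp

section Curve

variable {γ : ℝ → ℝ × ℝ}

theorem hasDerivAt_sG (hγ : ContDiff ℝ 1 γ) (t : ℝ) :
    HasDerivAt (sG γ) (enorm2 (deriv γ t)) t :=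
  ((continuous_enorm2.comp (hγ.continuous_deriv le_rfl)).integral_hasStrictDerivAt 0 t).hasDerivAt

theorem tendsto_enorm2_deriv_div_abs (hγ : ContDiff ℝ 2 γ) (h0 : deriv γ 0 = 0) :
    Tendsto (fun t => enorm2 (deriv γ t) / |t|) (𝓝[≠] 0)
      (𝓝 (enorm2 (iteratedDeriv 2 γ 0))) := by
  refine tendsto_enorm2_div_abs_of_hasDerivAt h0 ?_
  simpa using hasDerivAt_iteratedDeriv (n := 1) hγ 0

theorem tendsto_sqrt_abs_sG_div_abs (hγ : ContDiff ℝ 2 γ) (h0 : deriv γ 0 = 0) :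
    Tendsto (fun t => √|sG γ t| / |t|) (𝓝[≠] 0) (𝓝 √(enorm2 (iteratedDeriv 2 γ 0) / 2)) := by
  have h := tendsto_div_mul_abs_of_hasDerivAt (hasDerivAt_sG (hγ.of_le (by norm_num)))
    intervalIntegral.integral_same (tendsto_enorm2_deriv_div_abs hγ h0)
  have hN : 0 ≤ enorm2 (iteratedDeriv 2 γ 0) / 2 := div_nonneg (Real.sqrt_nonneg _) zero_le_two
  have habs : Tendsto (fun t => |sG γ t / (t * |t|)|) (𝓝[≠] 0)
      (𝓝 (enorm2 (iteratedDeriv 2 γ 0) / 2)) := by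
    simpa [abs_of_nonneg hN] using h.abs
  refine ((Real.continuous_sqrt.tendsto _).comp habs).congr fun t => ?_
  rw [Function.comp_apply, abs_div, abs_mul, abs_abs, Real.sqrt_div (abs_nonneg _),
    Real.sqrt_mul_self (abs_nonneg t)]

theorem tendsto_det2_deriv_div_sq (hγ : ContDiff ℝ 4 γ) (h0 : deriv γ 0 = 0) :
    Tendsto (fun t => det2 (deriv γ t) (iteratedDeriv 2 γ t) / t ^ 2) (𝓝[≠] 0)
      (𝓝 (det2 (iteratedDeriv 2 γ 0) (iteratedDeriv 3 γ 0) / 2)) := by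
  have h1 : ∀ t, HasDerivAt (deriv γ) (iteratedDeriv 2 γ t) t := fun t => by
    simpa using hasDerivAt_iteratedDeriv (n := 1) (hγ.of_le (by norm_num)) t
  have h2 := hasDerivAt_iteratedDeriv (n := 2) (hγ.of_le (by norm_num))
  have h3 := hasDerivAt_iteratedDeriv (n := 3) hγ
  refine tendsto_div_sq_of_hasDerivAt (f' := fun t => det2 (deriv γ t) (iteratedDeriv 3 γ t))
    (fun t => ((h1 t).det2 (h2 t)).congr_deriv ?_) (by simp [h0, det2]) (by simp [h0, det2])
    (((h1 0).det2 (h3 0)).congr_deriv (by simp [h0, det2]))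
  simp only [det2]
  ring

end Curve

/-- At a 3/2-cusp, `lim_{t→0} √|s_g(t)|·κ_g(t) = μ_g/(2√2)`. -/
theorem stmt_2 (γ : ℝ → ℝ × ℝ) (hγ : ContDiff ℝ (⊤:ℕ∞) γ) (hcusp : HasCusp γ) :
    Tendsto (fun t => Real.sqrt |sG γ t| * kappaG γ t) (𝓝[≠] (0:ℝ))
      (𝓝 (muG γ / (2 * Real.sqrt 2))) := by
  obtain ⟨h0, hD⟩ := hcusp
  have h4 : ContDiff ℝ 4 γ := hγ.of_le (WithTop.coe_le_coe.2 le_top)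
  have hN : 0 < enorm2 (iteratedDeriv 2 γ 0) := enorm2_pos fun h => hD (by simp [h, det2])
  have hspeed := tendsto_enorm2_deriv_div_abs (h4.of_le (by norm_num)) h0
  have key := ((tendsto_sqrt_abs_sG_div_abs (h4.of_le (by norm_num)) h0).mul
    (tendsto_det2_deriv_div_sq h4 h0)).div (hspeed.pow 3) (by positivity)
  rw [muG, ← sqrt_half_mul_half_div_pow_three hN]
  refine key.congr' ?_
  filter_upwards [self_mem_nhdsWithin, hspeed.eventually_ne hN.ne'] with t (ht : t ≠ 0) hspeed_ne
  have hv : enorm2 (deriv γ t) ≠ 0 := fun h => hspeed_ne (by simp [h])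
  rw [Pi.div_apply, kappaG, div_pow, show |t| ^ 3 = t ^ 2 * |t| by rw [pow_succ, sq_abs]]
  field_simp
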